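/- Lie derivative of a one-form along the flow (pullback formula for v·dx): for every continuously differentiable time-independent vector field v : ℝⁿ → ℝⁿ and all (t,l), ∂_t [ (D_l g(t,l))ᵀ v(g(t,l)) ] = (D_l g(t,l))ᵀ [ (u(t,·)·∇)v + (∇u(t,·))ᵀ v ](g(t,l)), where ((u·∇)v)ᵢ = Σⱼ uⱼ ∂_{xⱼ} vᵢ and ((∇u)ᵀ v)ᵢ = Σⱼ vⱼ ∂_{xᵢ} uⱼ. -/

import Mathlib

/-!
Differentiate the pairing `Σ_j (D_l g e_i)_j v(g)_j` by the product rule. The chain rule gives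
`∂_t v(g) = Dv(g) u(t, g)`. For the other factor, the hypotheses make `g` of class `C²`, so `∂_t`
and `D_l` commute and `∂_t D_l g = D_l (u(t, g)) = D_x u(t, g) ∘ D_l g`; moving `D_x u` across the
pairing produces the transpose term `(∇u)ᵀ v`.
-/

open ContinuousLinearMap

section PartialDerivatives

variable {E F : Type*} [NormedAddCommGroup E] [NormedSpace ℝ E]
  [NormedAddCommGroup F] [NormedSpace ℝ F] {f : ℝ × E → F} {p : ℝ × E}

theorem DifferentiableAt.deriv_comp_prodMk_left (hf : DifferentiableAt ℝ f p) :
    deriv (fun s => f (s, p.2)) p.1 = fderiv ℝ f p (1, 0) := by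
  have hpath : HasDerivAt (fun s : ℝ => (s, p.2)) ((1 : ℝ), (0 : E)) p.1 :=
    (hasDerivAt_id p.1).prodMk (hasDerivAt_const p.1 p.2)
  exact (hf.hasFDerivAt.comp_hasDerivAt_of_eq p.1 hpath rfl).deriv

theorem DifferentiableAt.fderiv_comp_prodMk_right (hf : DifferentiableAt ℝ f p) :
    fderiv ℝ (fun x => f (p.1, x)) p.2 = (fderiv ℝ f p).comp (inr ℝ ℝ E) :=
  (hf.hasFDerivAt.comp p.2 (hasFDerivAt_prodMk_right p.1 p.2)).fderiv

theorem DifferentiableAt.fderiv_eq_partials (hf : DifferentiableAt ℝ f p) :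
    fderiv ℝ f p = (fst ℝ ℝ E).smulRight (deriv (fun s => f (s, p.2)) p.1)
      + (fderiv ℝ (fun x => f (p.1, x)) p.2).comp (snd ℝ ℝ E) := by
  refine ContinuousLinearMap.ext fun ⟨a, w⟩ => ?_
  have hsplit : ((a, w) : ℝ × E) = a • ((1 : ℝ), (0 : E)) + ((0 : ℝ), w) := by simp
  rw [hf.deriv_comp_prodMk_left, hf.fderiv_comp_prodMk_right, hsplit, map_add, map_smul]
  simp

theorem contDiff_two_of_partials (hf : Differentiable ℝ f)
    (ht : ContDiff ℝ 1 fun p : ℝ × E => deriv (fun s => f (s, p.2)) p.1)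
    (hx : ContDiff ℝ 1 fun p : ℝ × E => fderiv ℝ (fun x => f (p.1, x)) p.2) :
    ContDiff ℝ 2 f := by
  refine (contDiff_succ_iff_fderiv (n := 1)).2 ⟨hf, by simp, ?_⟩
  have hfderiv : fderiv ℝ f = fun p => (fst ℝ ℝ E).smulRight (deriv (fun s => f (s, p.2)) p.1)
      + (fderiv ℝ (fun x => f (p.1, x)) p.2).comp (snd ℝ ℝ E) :=
    funext fun p => (hf p).fderiv_eq_partials
  rw [hfderiv]
  exact ((smulRightL ℝ (ℝ × E) F (fst ℝ ℝ E)).contDiff.comp ht).add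
    (hx.clm_comp contDiff_const)

theorem ContDiff.deriv_fderiv_comm (hf : ContDiff ℝ 2 f) (p : ℝ × E) (w : E) :
    deriv (fun s => fderiv ℝ (fun x => f (s, x)) p.2 w) p.1
      = fderiv ℝ (fun x => deriv (fun s => f (s, x)) p.1) p.2 w := by
  have hf1 : Differentiable ℝ f := hf.differentiable two_ne_zero
  have hf' : Differentiable ℝ (fderiv ℝ f) :=
    (hf.fderiv_right one_add_one_eq_two.le).differentiable one_ne_zero
  have hsymm := hf.contDiffAt.isSymmSndFDerivAt (x := p) (by simp)
  calc deriv (fun s => fderiv ℝ (fun x => f (s, x)) p.2 w) p.1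
      = deriv (fun s => fderiv ℝ f (s, p.2) (0, w)) p.1 := by
        congr 1; funext s
        simp [(hf1 (s, p.2)).fderiv_comp_prodMk_right]
    _ = fderiv ℝ (fderiv ℝ f) p (1, 0) (0, w) := by
        rw [((hf' p).clm_apply (differentiableAt_const ((0 : ℝ), w))).deriv_comp_prodMk_left]
        simp [fderiv_clm_apply (hf' p) (differentiableAt_const _)]
    _ = fderiv ℝ (fderiv ℝ f) p (0, w) (1, 0) := hsymm _ _
    _ = fderiv ℝ (fun x => fderiv ℝ f (p.1, x) (1, 0)) p.2 w := by
        rw [((hf' p).clm_apply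
          (differentiableAt_const ((1 : ℝ), (0 : E)))).fderiv_comp_prodMk_right]
        simp [fderiv_clm_apply (hf' p) (differentiableAt_const _)]
    _ = fderiv ℝ (fun x => deriv (fun s => f (s, x)) p.1) p.2 w := by
        congr 2; funext x
        exact ((hf1 (p.1, x)).deriv_comp_prodMk_left).symm

end PartialDerivatives

section Coordinates

variable {ι R M : Type*} [Fintype ι] [DecidableEq ι] [CommSemiring R] [AddCommMonoid M]
  [Module R M]

theorem LinearMap.apply_eq_sum_smul_apply_single (A : (ι → R) →ₗ[R] M) (w : ι → R) :
    A w = ∑ k, w k • A (Pi.single k 1) := by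
  conv_lhs => rw [pi_eq_sum_univ' w, map_sum]
  simp only [map_smul]

theorem LinearMap.sum_apply_mul_eq_sum_mul_transpose (A : (ι → R) →ₗ[R] (ι → R))
    (w v : ι → R) :
    ∑ j, A w j * v j = ∑ j, w j * ∑ k, v k * A (Pi.single j 1) k := by
  simp only [A.apply_eq_sum_smul_apply_single w, Finset.sum_apply, Pi.smul_apply, smul_eq_mul,
    Finset.sum_mul, Finset.mul_sum]
  rw [Finset.sum_comm]
  refine Finset.sum_congr rfl fun j _ => Finset.sum_congr rfl fun k _ => ?_
  ring

end Coordinates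

section Flow

variable {E : Type*} [NormedAddCommGroup E] [NormedSpace ℝ E] {g u : ℝ × E → E}

theorem hasDerivAt_flow (hg : Differentiable ℝ g)
    (hflow : ∀ t l, deriv (fun s => g (s, l)) t = u (t, g (t, l))) (t : ℝ) (l : E) :
    HasDerivAt (fun s => g (s, l)) (u (t, g (t, l))) t := by
  rw [← hflow]
  exact ((hg _).comp t (by fun_prop)).hasDerivAt

theorem hasDerivAt_fderiv_flow (hg : ContDiff ℝ 1 g)
    (hDg : ContDiff ℝ 1 fun p : ℝ × E => fderiv ℝ (fun l => g (p.1, l)) p.2)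
    (hu : ContDiff ℝ 1 u) (hflow : ∀ t l, deriv (fun s => g (s, l)) t = u (t, g (t, l)))
    (t : ℝ) (l w : E) :
    HasDerivAt (fun s => fderiv ℝ (fun l' => g (s, l')) l w)
      (fderiv ℝ (fun x => u (t, x)) (g (t, l)) (fderiv ℝ (fun l' => g (t, l')) l w)) t := by
  have hg' : Differentiable ℝ g := hg.differentiable one_ne_zero
  have hg2 : ContDiff ℝ 2 g := by
    refine contDiff_two_of_partials hg' ?_ hDg
    simp only [hflow]
    exact hu.comp (contDiff_fst.prodMk hg)
  have hDg' : DifferentiableAt ℝ (fun s => fderiv ℝ (fun l' => g (s, l')) l) t :=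
    (hDg.differentiable one_ne_zero (t, l)).comp (f := fun s => (s, l)) t (by fun_prop)
  refine (hDg'.clm_apply (differentiableAt_const w)).hasDerivAt.congr_deriv ?_
  have hu' : DifferentiableAt ℝ (fun x => u (t, x)) (g (t, l)) :=
    (hu.differentiable one_ne_zero _).comp _ (by fun_prop)
  have hgt : DifferentiableAt ℝ (fun x => g (t, x)) l := by fun_prop
  calc deriv (fun s => fderiv ℝ (fun l' => g (s, l')) l w) t
      = fderiv ℝ (fun x => u (t, g (t, x))) l w := by
        simp only [hg2.deriv_fderiv_comm (t, l), hflow]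
    _ = _ := congrArg (· w) (hu'.hasFDerivAt.comp l hgt.hasFDerivAt).fderiv

end Flow

/-- **Lie derivative of a one-form along the flow** (pullback formula for `v·dx`).
For every continuously differentiable time-independent vector field `v : ℝⁿ → ℝⁿ` and
all `(t, l)`,
`∂_t [(D_l g(t,l))ᵀ v(g(t,l))]
  = (D_l g(t,l))ᵀ [(u(t,·)·∇) v + (∇ u(t,·))ᵀ v](g(t,l))`,
written componentwise: component `i` of `(D_l g)ᵀ w` is `Σ_j (D_l g (e_i))_j w_j`,
`((u·∇)v)_j = Σ_k u_k ∂_{x_k} v_j` and `((∇u)ᵀ v)_j = Σ_k v_k ∂_{x_j} u_k`. -/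
theorem lie_derivative_one_form_pullback
    (n : ℕ)
    (g : ℝ × (Fin n → ℝ) → (Fin n → ℝ))
    (u : ℝ × (Fin n → ℝ) → (Fin n → ℝ))
    (v : (Fin n → ℝ) → (Fin n → ℝ))
    (hg : ContDiff ℝ 1 g)
    (hDg : ContDiff ℝ 1 (fun p : ℝ × (Fin n → ℝ) =>
      fderiv ℝ (fun l => g (p.1, l)) p.2))
    (hu : ContDiff ℝ 1 u)
    (hv : ContDiff ℝ 1 v)
    (hflow : ∀ t l, deriv (fun s => g (s, l)) t = u (t, g (t, l))) :
    ∀ (t : ℝ) (l : Fin n → ℝ) (i : Fin n),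
      deriv (fun s =>
          ∑ j, (fderiv ℝ (fun l' => g (s, l')) l (Pi.single i 1)) j * v (g (s, l)) j) t
        = ∑ j, (fderiv ℝ (fun l' => g (t, l')) l (Pi.single i 1)) j *
            ((∑ k, u (t, g (t, l)) k *
                fderiv ℝ (fun x => v x j) (g (t, l)) (Pi.single k 1))
              + ∑ k, v (g (t, l)) k *
                  fderiv ℝ (fun x => u (t, x) k) (g (t, l)) (Pi.single j 1)) := by
  intro t l i
  have hv' : Differentiable ℝ v := hv.differentiable one_ne_zero
  have hu' : Differentiable ℝ (fun x => u (t, x)) :=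
    (hu.differentiable one_ne_zero).comp (by fun_prop)
  set J : ℝ → Fin n → ℝ := fun s => fderiv ℝ (fun l' => g (s, l')) l (Pi.single i 1)
  set Du := fderiv ℝ (fun x => u (t, x)) (g (t, l))
  set Dv := fderiv ℝ v (g (t, l))
  have hJ : HasDerivAt J (Du (J t)) t := hasDerivAt_fderiv_flow hg hDg hu hflow t l _
  have hvg : HasDerivAt (fun s => v (g (s, l))) (Dv (u (t, g (t, l)))) t :=
    (hv' _).hasFDerivAt.comp_hasDerivAt t
      (hasDerivAt_flow (hg.differentiable one_ne_zero) hflow t l)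
  have hsum : HasDerivAt (fun s => ∑ j, J s j * v (g (s, l)) j)
      (∑ j, (Du (J t) j * v (g (t, l)) j + J t j * Dv (u (t, g (t, l))) j)) t :=
    HasDerivAt.fun_sum fun j _ => (hasDerivAt_pi.1 hJ j).mul (hasDerivAt_pi.1 hvg j)
  have htranspose := (Du : (Fin n → ℝ) →ₗ[ℝ] (Fin n → ℝ)).sum_apply_mul_eq_sum_mul_transpose
    (J t) (v (g (t, l)))
  have hexpand := (Dv : (Fin n → ℝ) →ₗ[ℝ] (Fin n → ℝ)).apply_eq_sum_smul_apply_single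
    (u (t, g (t, l)))
  rw [coe_coe] at htranspose hexpand
  rw [hsum.deriv, Finset.sum_add_distrib, htranspose, add_comm, ← Finset.sum_add_distrib]
  refine Finset.sum_congr rfl fun j _ => ?_
  simp only [hexpand, fderiv_apply (hv' _), fderiv_apply (hu' _), comp_apply, proj_apply,
    Finset.sum_apply, Pi.smul_apply, smul_eq_mul, ← mul_add, J, Du, Dv]
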